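/- Let N ≥ 1, let v ∈ ℝ^N have all entries in {+1/√N, −1/√N}, let u ∈ ℝ^N be a unit vector with ⟨u, v⟩ = 0, let W ⊆ ℝ^N be a two-dimensional subspace with P_W u ≠ 0, and let w ∈ W be a unit vector with ⟨w, P_W u⟩ = 0 and ⟨w, v⟩ ≥ 0. Then ‖(1/√N)·sgn(w) − v‖ ≤ 2·‖v − P_W v‖ + 4·‖u − P_W u‖, where sgn is applied entrywise with sgn(x) = 1 for x ≥ 0 and sgn(x) = −1 for x < 0, and P_W denotes the orthogonal projection onto W. -/

import Mathlib

/-!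
Entrywise, `(1/√N)·sgn(w) − v` vanishes where `w` has the sign of `v`; elsewhere it is `±2/√N`
while `⟪w, v⟫ w_i − v_i` has the sign of `−v_i`, hence modulus at least `1/√N`. So the left side
is at most `2‖⟪w, v⟫ w − v‖`.

Write `p = P_W v`, `q = P_W u`. In the plane `W` the vector `r = p − ⟪w, v⟫ w` is, like `q`,
orthogonal to `w`, so `r ∥ q` and `‖r‖‖q‖ = |⟪p, q⟫| = |⟪v − p, u − q⟫| ≤ ‖u − q‖` because
`u ⊥ v`. As `‖r‖ ≤ 1` and `‖q‖² + ‖u − q‖² = 1`, this forces `‖r‖ ≤ 2‖u − q‖`, and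
`‖⟪w, v⟫ w − v‖ ≤ ‖v − p‖ + ‖r‖`.
-/

open scoped RealInnerProductSpace

/-- Entrywise sign vector: `sgn(x) = 1` if `x ≥ 0`, and `−1` if `x < 0`. -/
noncomputable def sgnVec {N : ℕ} (x : EuclideanSpace ℝ (Fin N)) : EuclideanSpace ℝ (Fin N) :=
  WithLp.toLp 2 (fun i => if 0 ≤ x i then (1 : ℝ) else -1)

open Module

lemma abs_mul_sign_sub_le {a c t x : ℝ} (ha : 0 ≤ a) (hc : 0 ≤ c) (ht : t = c ∨ t = -c) :
    |c * (if 0 ≤ x then 1 else -1) - t| ≤ 2 * |a * x - t| := by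
  rcases ht with rfl | rfl <;> split_ifs with hx
  · simp
  · have : a * x ≤ 0 := mul_nonpos_of_nonneg_of_nonpos ha (not_le.1 hx).le
    rw [abs_of_nonpos (by linarith), abs_of_nonpos (by linarith)]; linarith
  · have : 0 ≤ a * x := mul_nonneg ha hx
    rw [abs_of_nonneg (by linarith), abs_of_nonneg (by linarith)]; linarith
  · simp

lemma EuclideanSpace.norm_le_norm_of_abs_le {ι : Type*} [Fintype ι]
    {x y : EuclideanSpace ℝ ι} (h : ∀ i, |x i| ≤ |y i|) : ‖x‖ ≤ ‖y‖ := by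
  simp only [EuclideanSpace.norm_eq, Real.norm_eq_abs, sq_abs]
  exact Real.sqrt_le_sqrt (Finset.sum_le_sum fun i _ => sq_le_sq.2 (h i))

lemma EuclideanSpace.norm_eq_of_forall_abs_eq {ι : Type*} [Fintype ι]
    {x : EuclideanSpace ℝ ι} {c : ℝ} (hc : 0 ≤ c) (h : ∀ i, |x i| = c) :
    ‖x‖ = √(Fintype.card ι) * c := by
  simp [EuclideanSpace.norm_eq, h, Real.sqrt_mul (Nat.cast_nonneg _), Real.sqrt_sq hc]

lemma norm_smul_sgnVec_sub_le {N : ℕ} {a c : ℝ} {v w : EuclideanSpace ℝ (Fin N)}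
    (ha : 0 ≤ a) (hc : 0 ≤ c) (hv : ∀ i, v i = c ∨ v i = -c) :
    ‖c • sgnVec w - v‖ ≤ 2 * ‖a • w - v‖ := by
  rw [← abs_two, ← Real.norm_eq_abs, ← norm_smul]
  refine EuclideanSpace.norm_le_norm_of_abs_le fun i => ?_
  simpa [sgnVec, abs_mul] using abs_mul_sign_sub_le (x := w i) ha hc (hv i)

lemma le_two_mul_of_mul_le {r q ε : ℝ} (hr0 : 0 ≤ r) (hr1 : r ≤ 1) (hq : 0 ≤ q) (hε : 0 ≤ ε)
    (hqε : q ^ 2 + ε ^ 2 = 1) (hrq : r * q ≤ ε) : r ≤ 2 * ε := by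
  -- if `q < 1/2` then `ε² > 3/4`, so `2ε > 1 ≥ r`
  by_cases h : 1 / 2 ≤ q
  · nlinarith
  · nlinarith

section InnerProductSpace

variable {E : Type*} [NormedAddCommGroup E] [InnerProductSpace ℝ E]

lemma abs_inner_eq_norm_mul_norm_of_finrank_eq_two {W : Submodule ℝ E} (hW : finrank ℝ W = 2)
    {w x y : E} (hw : w ∈ W) (hw0 : w ≠ 0) (hx : x ∈ W) (hy : y ∈ W)
    (hwx : ⟪w, x⟫ = 0) (hwy : ⟪w, y⟫ = 0) : |⟪x, y⟫| = ‖x‖ * ‖y‖ := by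
  have : Fact (finrank ℝ W = 2) := ⟨hW⟩
  rcases eq_or_ne y 0 with rfl | hy0
  · simp
  have hspan : (⟨x, hx⟩ : W) ∈ ℝ ∙ (⟨y, hy⟩ : W) :=
    Submodule.mem_span_singleton_of_inner_eq_zero_of_inner_eq_zero (v := ⟨w, hw⟩)
      (by simpa using hw0) (by simpa using hy0) hwx hwy
  have := ((norm_inner_eq_norm_tfae ℝ (⟨y, hy⟩ : W) ⟨x, hx⟩).out 3 0).1 (Or.inr hspan)
  simpa [real_inner_comm, mul_comm] using this

namespace Submodule

variable (W : Submodule ℝ E) [W.HasOrthogonalProjection]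

lemma abs_inner_starProjection_le_of_inner_eq_zero {u v : E} (huv : ⟪u, v⟫ = 0) :
    |⟪W.starProjection u, W.starProjection v⟫| ≤
      ‖u - W.starProjection u‖ * ‖v - W.starProjection v‖ := by
  have hPu_perp : ⟪W.starProjection u, v - W.starProjection v⟫ = 0 :=
    inner_right_of_mem_orthogonal (W.starProjection_apply_mem u)
      (W.sub_starProjection_mem_orthogonal v)
  have hPv_perp : ⟪u - W.starProjection u, W.starProjection v⟫ = 0 :=
    inner_left_of_mem_orthogonal (W.starProjection_apply_mem v)
      (W.sub_starProjection_mem_orthogonal u)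
  have hsplit : ⟪u, v⟫ = ⟪W.starProjection u, W.starProjection v⟫ +
      ⟪u - W.starProjection u, v - W.starProjection v⟫ := by
    conv_lhs => rw [← add_sub_cancel (W.starProjection u) u,
      ← add_sub_cancel (W.starProjection v) v]
    rw [inner_add_left, inner_add_right, inner_add_right, hPu_perp, hPv_perp]
    ring
  rw [eq_neg_of_add_eq_zero_left (hsplit.symm.trans huv), abs_neg]
  exact abs_real_inner_le_norm _ _

lemma norm_starProjection_sq_add_norm_sub_sq (u : E) :
    ‖W.starProjection u‖ ^ 2 + ‖u - W.starProjection u‖ ^ 2 = ‖u‖ ^ 2 := by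
  rw [W.norm_sq_eq_add_norm_sq_starProjection u, starProjection_orthogonal_val]

lemma norm_sub_starProjection_le (u : E) : ‖u - W.starProjection u‖ ≤ ‖u‖ := by
  simpa using Wᗮ.norm_starProjection_apply_le u

end Submodule

theorem norm_inner_smul_sub_le_of_finrank_eq_two {W : Submodule ℝ E}
    [W.HasOrthogonalProjection] (hW : finrank ℝ W = 2) {u v w : E}
    (hu : ‖u‖ = 1) (hv : ‖v‖ = 1) (huv : ⟪u, v⟫ = 0) (hwW : w ∈ W) (hw : ‖w‖ = 1)
    (hwu : ⟪w, W.starProjection u⟫ = 0) :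
    ‖⟪w, v⟫ • w - v‖ ≤ ‖v - W.starProjection v‖ + 2 * ‖u - W.starProjection u‖ := by
  set p := W.starProjection v
  set q := W.starProjection u
  set a := ⟪w, v⟫
  set r := p - a • w
  have hwp : ⟪w, p⟫ = a := by
    rw [← W.inner_starProjection_left_eq_right, W.starProjection_eq_self_iff.2 hwW]
  have hwr : ⟪w, r⟫ = 0 := by
    simp [r, inner_sub_right, real_inner_smul_right, hwp, hw]
  have hr_sq : ‖r‖ ^ 2 = ‖p‖ ^ 2 - a ^ 2 := by
    rw [norm_sub_sq_real, real_inner_smul_right, real_inner_comm, hwp, norm_smul, hw,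
      Real.norm_eq_abs, mul_one, sq_abs]
    ring
  have hr_le_one : ‖r‖ ≤ 1 := by
    have : ‖p‖ ≤ 1 := hv ▸ W.norm_starProjection_apply_le v
    nlinarith [norm_nonneg r, norm_nonneg p]
  have hrq : ‖r‖ * ‖q‖ ≤ ‖u - q‖ := calc
    ‖r‖ * ‖q‖ = |⟪r, q⟫| :=
      (abs_inner_eq_norm_mul_norm_of_finrank_eq_two hW hwW (by simp [← norm_ne_zero_iff, hw])
        (W.sub_mem (W.starProjection_apply_mem v) (W.smul_mem a hwW))
        (W.starProjection_apply_mem u) hwr hwu).symm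
    _ = |⟪q, p⟫| := by
      rw [real_inner_comm, inner_sub_right, real_inner_smul_right, real_inner_comm w q, hwu,
        mul_zero, sub_zero]
    _ ≤ ‖u - q‖ * ‖v - p‖ := W.abs_inner_starProjection_le_of_inner_eq_zero huv
    _ ≤ ‖u - q‖ := by
      have := hv ▸ W.norm_sub_starProjection_le v
      exact mul_le_of_le_one_right (norm_nonneg _) this
  have hr : ‖r‖ ≤ 2 * ‖u - q‖ := le_two_mul_of_mul_le (norm_nonneg _) hr_le_one (norm_nonneg _)
    (norm_nonneg _) (by rw [W.norm_starProjection_sq_add_norm_sub_sq, hu, one_pow]) hrq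
  calc ‖a • w - v‖ = ‖(p - v) - r‖ := by congr 1; simp only [r]; abel
    _ ≤ ‖v - p‖ + ‖r‖ := by rw [norm_sub_rev v p]; exact norm_sub_le _ _
    _ ≤ ‖v - p‖ + 2 * ‖u - q‖ := by gcongr

end InnerProductSpace

theorem statement_12_general
    (N : ℕ) (hN : 1 ≤ N)
    (v u : EuclideanSpace ℝ (Fin N))
    (hv : ∀ i, v i = (Real.sqrt N)⁻¹ ∨ v i = -(Real.sqrt N)⁻¹)
    (hu : ‖u‖ = 1) (huv : ⟪u, v⟫ = 0)
    (W : Submodule ℝ (EuclideanSpace ℝ (Fin N))) (hWdim : Module.finrank ℝ W = 2)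
    (w : EuclideanSpace ℝ (Fin N)) (hwW : w ∈ W) (hw : ‖w‖ = 1)
    (hwu : ⟪w, (W.orthogonalProjectionOnto u : EuclideanSpace ℝ (Fin N))⟫ = 0)
    (hwv : 0 ≤ ⟪w, v⟫) :
    ‖(Real.sqrt N)⁻¹ • sgnVec w - v‖ ≤
      2 * ‖v - (W.orthogonalProjectionOnto v : EuclideanSpace ℝ (Fin N))‖ +
        4 * ‖u - (W.orthogonalProjectionOnto u : EuclideanSpace ℝ (Fin N))‖ := by
  have hv_norm : ‖v‖ = 1 := by
    have hsqrt : √(N : ℝ) ≠ 0 := Real.sqrt_ne_zero'.2 (by exact_mod_cast hN)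
    rw [EuclideanSpace.norm_eq_of_forall_abs_eq (c := (√N)⁻¹) (by positivity) fun i => ?_,
      Fintype.card_fin, mul_inv_cancel₀ hsqrt]
    rcases hv i with h | h <;> simp [h]
  calc ‖(√N)⁻¹ • sgnVec w - v‖ ≤ 2 * ‖⟪w, v⟫ • w - v‖ :=
        norm_smul_sgnVec_sub_le hwv (by positivity) hv
    _ ≤ 2 * (‖v - W.starProjection v‖ + 2 * ‖u - W.starProjection u‖) := by
        gcongr
        exact norm_inner_smul_sub_le_of_finrank_eq_two hWdim hu hv_norm huv hwW hw hwu
    _ = _ := by rw [W.starProjection_apply, W.starProjection_apply]; ring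

/-- Let `v ∈ ℝ^N` have entries `±1/√N`, `u` a unit vector with `⟨u,v⟩ = 0`,
`W` a two-dimensional subspace with `P_W u ≠ 0`, and `w ∈ W` a unit vector with
`⟨w, P_W u⟩ = 0` and `⟨w, v⟩ ≥ 0`.  Then
`‖(1/√N)·sgn(w) − v‖ ≤ 2·‖v − P_W v‖ + 4·‖u − P_W u‖`. -/
theorem statement_12
    (N : ℕ) (hN : 1 ≤ N)
    (v u : EuclideanSpace ℝ (Fin N))
    (hv : ∀ i, v i = (Real.sqrt N)⁻¹ ∨ v i = -(Real.sqrt N)⁻¹)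
    (hu : ‖u‖ = 1) (huv : ⟪u, v⟫ = 0)
    (W : Submodule ℝ (EuclideanSpace ℝ (Fin N))) (hWdim : Module.finrank ℝ W = 2)
    (hPu : (W.orthogonalProjectionOnto u : EuclideanSpace ℝ (Fin N)) ≠ 0)
    (w : EuclideanSpace ℝ (Fin N)) (hwW : w ∈ W) (hw : ‖w‖ = 1)
    (hwu : ⟪w, (W.orthogonalProjectionOnto u : EuclideanSpace ℝ (Fin N))⟫ = 0)
    (hwv : 0 ≤ ⟪w, v⟫) :
    ‖(Real.sqrt N)⁻¹ • sgnVec w - v‖ ≤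
      2 * ‖v - (W.orthogonalProjectionOnto v : EuclideanSpace ℝ (Fin N))‖ +
        4 * ‖u - (W.orthogonalProjectionOnto u : EuclideanSpace ℝ (Fin N))‖ :=
  statement_12_general N hN v u hv hu huv W hWdim w hwW hw hwu hwv
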